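/- Let A be formally smooth relative to S (i.e., Ω¹_S A is a finitely generated projective A^e-module), let ∇ be an S^e-linear connection on Ω¹_S A, and define the triple divergence TDiv^∇(Θ) = Tr(i_{Θ^e}∇ − L_Θ) ∈ |trip(A)| for Θ ∈ DDer_S(A). Then the triple divergence lifts the double divergence: |mult| ∘ TDiv^∇ = Div^∇ ∘ mult_*, where mult_*: DDer_S(A) → Der_S(A) sends Θ to mult∘Θ and Div^∇(f) = Tr((i_{f^e}⊗id)∘∇ − L_f) ∈ |A^e|. -/

import Mathlib

/-!
The multiplication `mult : trip(A) → Aᵉ` intertwines the outer `Aᵉ`-bimodule structure of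
`trip(A)` with that of `Aᵉ`, so it commutes with traces: `mult (Tr φ) = Tr ((mult ⊗ id) ∘ φ)`.
It therefore suffices to show `(mult ⊗ id) ∘ (i_{Θᵉ}∇ − L_Θ) = i_{fᵉ}∇ − L_f`. Both sides are
`Aᵉ`-linear and `Ω` is generated by the `d a`, where the connection terms agree because
`mult ∘ Θᵉ = fᵉ`, and the Lie derivatives agree by the Leibniz rule `d (p q) = p dq + dp q`
applied to `Θ a = ∑ p ⊗ q` (using `Θ 1 = 0`).
-/
set_option synthInstance.maxHeartbeats 1000000
set_option maxHeartbeats 2000000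

open TensorProduct MulOpposite LinearMap

noncomputable section

variable (K A : Type*) [Field K] [CharZero K] [Ring A] [Algebra K A]

/-- The enveloping algebra `Aᵉ = A ⊗ Aᵒᵖ`. -/
abbrev Env := A ⊗[K] Aᵐᵒᵖ

/-- First summand `(A⊗A)⊗Aᵒᵖ` of the triple `trip(A)`. -/
abbrev Trip₁ := (A ⊗[K] A) ⊗[K] Aᵐᵒᵖ

/-- Second summand `A⊗(Aᵒᵖ⊗Aᵒᵖ)` of the triple `trip(A)`. -/
abbrev Trip₂ := A ⊗[K] (Aᵐᵒᵖ ⊗[K] Aᵐᵒᵖ)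

/-- `trip(A) = Trip₁ ⊕ Trip₂` (componentwise a ring). -/
abbrev Trip := Trip₁ K A × Trip₂ K A

instance : AddCommGroup (Trip K A) := by exact Prod.instAddCommGroup

/-- `Θ ↦ Θᵒᵖ`. -/
def ddOp (Θ : A →ₗ[K] A ⊗[K] A) : Aᵐᵒᵖ →ₗ[K] Aᵐᵒᵖ ⊗[K] Aᵐᵒᵖ :=
  ((TensorProduct.comm K Aᵐᵒᵖ Aᵐᵒᵖ).toLinearMap ∘ₗ
      TensorProduct.map (opLinearEquiv K).toLinearMap (opLinearEquiv K).toLinearMap) ∘ₗ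
    Θ ∘ₗ (opLinearEquiv K (M := A)).symm.toLinearMap

/-- First component of `Θᵉ : Aᵉ → trip(A)`: `a⊗b̄ ↦ Θ(a)⊗b̄`. -/
def thetaE₁ (Θ : A →ₗ[K] A ⊗[K] A) : Env K A →ₗ[K] Trip₁ K A := rTensor Aᵐᵒᵖ Θ

/-- Second component of `Θᵉ : Aᵉ → trip(A)`: `a⊗b̄ ↦ a⊗Θᵒᵖ(b̄)`. -/
def thetaE₂ (Θ : A →ₗ[K] A ⊗[K] A) : Env K A →ₗ[K] Trip₂ K A := lTensor A (ddOp K A Θ)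

/-- Left-action embedding `Aᵉ → Trip₁`, `a⊗b̄ ↦ (a⊗1)⊗b̄`. -/
def embL₁ : Env K A →ₗ[K] Trip₁ K A := rTensor Aᵐᵒᵖ ((TensorProduct.mk K A A).flip 1)

/-- Left-action embedding `Aᵉ → Trip₂`, `a⊗b̄ ↦ a⊗(b̄⊗1)`. -/
def embL₂ : Env K A →ₗ[K] Trip₂ K A := lTensor A ((TensorProduct.mk K Aᵐᵒᵖ Aᵐᵒᵖ).flip 1)

/-- Right-action embedding `Aᵉ → Trip₁`, `a⊗b̄ ↦ (1⊗a)⊗b̄`. -/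
def embR₁ : Env K A →ₗ[K] Trip₁ K A := rTensor Aᵐᵒᵖ (TensorProduct.mk K A A 1)

/-- Right-action embedding `Aᵉ → Trip₂`, `a⊗b̄ ↦ a⊗(1⊗b̄)`. -/
def embR₂ : Env K A →ₗ[K] Trip₂ K A := lTensor A (TensorProduct.mk K Aᵐᵒᵖ Aᵐᵒᵖ 1)

/-- The multiplication map `mult : trip(A) → Aᵉ`. -/
def multTrip : Trip K A →ₗ[K] Env K A :=
  LinearMap.coprod (rTensor Aᵐᵒᵖ (mul' K A)) (lTensor A (mul' K Aᵐᵒᵖ))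

/-- `a ↦ a ⊗ 1̄ ∈ Aᵉ`. -/
def inclE : A →ₗ[K] Env K A := (TensorProduct.mk K A Aᵐᵒᵖ).flip 1

/-- `u ↦ (u⊗1)⊗1̄ ∈ Trip₁` (the identification `A ⊗ Ω ≅ Trip₁ ⊗_{Aᵉ} Ω`). -/
def jay₁ : A →ₗ[K] Trip₁ K A :=
  ((TensorProduct.mk K (A ⊗[K] A) Aᵐᵒᵖ).flip 1) ∘ₗ ((TensorProduct.mk K A A).flip 1)

/-- `u ↦ 1⊗(ū⊗1̄) ∈ Trip₂` (the identification `Ω ⊗ A ≅ Trip₂ ⊗_{Aᵉ} Ω`). -/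
def jay₂ : A →ₗ[K] Trip₂ K A :=
  (TensorProduct.mk K A (Aᵐᵒᵖ ⊗[K] Aᵐᵒᵖ) 1) ∘ₗ
    (((TensorProduct.mk K Aᵐᵒᵖ Aᵐᵒᵖ).flip 1) ∘ₗ (opLinearEquiv K (M := A)).toLinearMap)

instance : AddCommGroup (Env K A ⊗[K] Env K A) := by
  exact TensorProduct.addCommGroup (R := K) (M := Env K A) (N := Env K A)

/-- `d_{Aᵉ} ξ = 1⊗ξ − ξ⊗1`, the universal derivation of `Aᵉ` (representative level). -/
def dEnv : Env K A →ₗ[K] Env K A ⊗[K] Env K A :=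
  TensorProduct.mk K (Env K A) (Env K A) 1 - (TensorProduct.mk K (Env K A) (Env K A)).flip 1

section OmegaModule

variable (Ω : Type*) [AddCommGroup Ω] [Module K Ω] [Module (Env K A) Ω]
  [IsScalarTower K (Env K A) Ω] [SMulCommClass (Env K A) K Ω]

instance : AddCommGroup (Trip₁ K A ⊗[K] Ω) := by
  exact TensorProduct.addCommGroup (R := K) (M := Trip₁ K A) (N := Ω)

instance : AddCommGroup (Trip₂ K A ⊗[K] Ω) := by
  exact TensorProduct.addCommGroup (R := K) (M := Trip₂ K A) (N := Ω)

instance : AddCommGroup (Env K A ⊗[K] Ω) := by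
  exact TensorProduct.addCommGroup (R := K) (M := Env K A) (N := Ω)

variable {K A Ω}

/-- For fixed `ξ ∈ Aᵉ`, the `K`-linear map `ω ↦ ξ • ω`. -/
def smulFix (ξ : Env K A) : Ω →ₗ[K] Ω where
  toFun ω := ξ • ω
  map_add' := smul_add ξ
  map_smul' k ω := smul_comm ξ k ω

/-- For fixed `ω`, the `K`-linear map `ξ ↦ ξ • ω`. -/
def smulOn (ω : Ω) : Env K A →ₗ[K] Ω where
  toFun ξ := ξ • ω
  map_add' ξ η := add_smul ξ η ω
  map_smul' k ξ := smul_assoc k ξ ω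

variable (K A Ω)

/-- Contraction against the derivation `Θᵉ`, first component:
`Ω¹Aᵉ → Trip₁`, `ξ dη ↦ (embL ξ * Θᵉ(η))₁`. -/
def contrT₁ (Θ : A →ₗ[K] A ⊗[K] A) : Env K A ⊗[K] Env K A →ₗ[K] Trip₁ K A :=
  TensorProduct.lift (((LinearMap.mul K (Trip₁ K A)) ∘ₗ embL₁ K A).compl₂ (thetaE₁ K A Θ))

/-- Contraction against the derivation `Θᵉ`, second component. -/
def contrT₂ (Θ : A →ₗ[K] A ⊗[K] A) : Env K A ⊗[K] Env K A →ₗ[K] Trip₂ K A :=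
  TensorProduct.lift (((LinearMap.mul K (Trip₂ K A)) ∘ₗ embL₂ K A).compl₂ (thetaE₂ K A Θ))

/-- Contraction against the derivation `fᵉ = f⊗id + id⊗fᵒᵖ` of `Aᵉ`:
`Ω¹Aᵉ → Aᵉ`, `ξ dη ↦ ξ * fᵉ(η)`. -/
def contrE (f : A →ₗ[K] A) : Env K A ⊗[K] Env K A →ₗ[K] Env K A :=
  TensorProduct.lift ((LinearMap.mul K (Env K A)).compl₂
    (rTensor Aᵐᵒᵖ f + lTensor A
      ((opLinearEquiv K (M := A)).toLinearMap ∘ₗ f ∘ₗ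
        (opLinearEquiv K (M := A)).symm.toLinearMap)))

end OmegaModule

/-- The commutator subspace `[Aᵉ,Aᵉ]`, so that `|Aᵉ| = Aᵉ/[Aᵉ,Aᵉ]`. -/
def envComm : Submodule K (Env K A) :=
  Submodule.span K {x | ∃ p q : Env K A, x = p * q - q * p}

end

lemma AddMonoidHom.eq_of_map_smul_of_span_eq_top {R M N : Type*} [Semiring R]
    [AddCommMonoid M] [Module R M] [AddCommMonoid N] [Module R N] {s : Set M}
    (hs : Submodule.span R s = ⊤) {f g : M →+ N} (hf : ∀ (r : R) m, f (r • m) = r • f m)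
    (hg : ∀ (r : R) m, g (r • m) = r • g m) (h : Set.EqOn f g s) : f = g := by
  have := LinearMap.ext_on hs (f := (⟨f.toAddHom, hf⟩ : M →ₗ[R] N)) (g := ⟨g.toAddHom, hg⟩) h
  exact AddMonoidHom.ext (LinearMap.congr_fun this)

section Bimodule

variable {K A : Type*} [Field K] [Ring A] [Algebra K A]

lemma rTensor_mul'_mul_embL₁ (ξ : Env K A) (t : Trip₁ K A) :
    rTensor Aᵐᵒᵖ (mul' K A) (LinearMap.mul K (Trip₁ K A) (embL₁ K A ξ) t) =
      ξ * rTensor Aᵐᵒᵖ (mul' K A) t := by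
  have h : (LinearMap.mul K (Trip₁ K A) ∘ₗ embL₁ K A).compr₂ (rTensor Aᵐᵒᵖ (mul' K A)) =
      (LinearMap.mul K (Env K A)).compl₂ (rTensor Aᵐᵒᵖ (mul' K A)) := by
    ext; simp [embL₁, mul_assoc]
  exact LinearMap.congr_fun₂ h ξ t

lemma rTensor_mul'_mul_embR₁ (t : Trip₁ K A) (ξ : Env K A) :
    rTensor Aᵐᵒᵖ (mul' K A) (LinearMap.mul K (Trip₁ K A) t (embR₁ K A ξ)) =
      rTensor Aᵐᵒᵖ (mul' K A) t * ξ := by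
  have h : ((LinearMap.mul K (Trip₁ K A)).compl₂ (embR₁ K A)).compr₂ (rTensor Aᵐᵒᵖ (mul' K A)) =
      LinearMap.mul K (Env K A) ∘ₗ rTensor Aᵐᵒᵖ (mul' K A) := by
    ext; simp [embR₁, mul_assoc]
  exact LinearMap.congr_fun₂ h t ξ

lemma lTensor_mul'_mul_embL₂ (ξ : Env K A) (t : Trip₂ K A) :
    lTensor A (mul' K Aᵐᵒᵖ) (LinearMap.mul K (Trip₂ K A) (embL₂ K A ξ) t) =
      ξ * lTensor A (mul' K Aᵐᵒᵖ) t := by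
  have h : (LinearMap.mul K (Trip₂ K A) ∘ₗ embL₂ K A).compr₂ (lTensor A (mul' K Aᵐᵒᵖ)) =
      (LinearMap.mul K (Env K A)).compl₂ (lTensor A (mul' K Aᵐᵒᵖ)) := by
    ext; simp [embL₂, mul_assoc]
  exact LinearMap.congr_fun₂ h ξ t

lemma lTensor_mul'_mul_embR₂ (t : Trip₂ K A) (ξ : Env K A) :
    lTensor A (mul' K Aᵐᵒᵖ) (LinearMap.mul K (Trip₂ K A) t (embR₂ K A ξ)) =
      lTensor A (mul' K Aᵐᵒᵖ) t * ξ := by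
  have h : ((LinearMap.mul K (Trip₂ K A)).compl₂ (embR₂ K A)).compr₂ (lTensor A (mul' K Aᵐᵒᵖ)) =
      LinearMap.mul K (Env K A) ∘ₗ lTensor A (mul' K Aᵐᵒᵖ) := by
    ext; simp [embR₂, mul_assoc]
  exact LinearMap.congr_fun₂ h t ξ

lemma mul'_comm_map_op (u : A ⊗[K] A) :
    mul' K Aᵐᵒᵖ (TensorProduct.comm K Aᵐᵒᵖ Aᵐᵒᵖ
      (TensorProduct.map (opLinearEquiv K).toLinearMap (opLinearEquiv K).toLinearMap u)) =
      op (mul' K A u) := by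
  induction u using TensorProduct.induction_on with
  | zero => simp
  | add u v hu hv => simp only [map_add, op_add, hu, hv]
  | tmul p q => simp

lemma mul'_ddOp (Θ : A →ₗ[K] A ⊗[K] A) (b : Aᵐᵒᵖ) :
    mul' K Aᵐᵒᵖ (ddOp K A Θ b) = op (mul' K A (Θ (unop b))) :=
  mul'_comm_map_op (Θ (unop b))

lemma multTrip_thetaE (Θ : A →ₗ[K] A ⊗[K] A) (η : Env K A) :
    multTrip K A (thetaE₁ K A Θ η, thetaE₂ K A Θ η) =
      (rTensor Aᵐᵒᵖ (mul' K A ∘ₗ Θ) + lTensor A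
        ((opLinearEquiv K (M := A)).toLinearMap ∘ₗ (mul' K A ∘ₗ Θ) ∘ₗ
          (opLinearEquiv K (M := A)).symm.toLinearMap)) η := by
  induction η using TensorProduct.induction_on with
  | zero => simp [multTrip]
  | add u v hu hv =>
    simp only [multTrip, coprod_apply, map_add, LinearMap.add_apply] at hu hv ⊢
    rw [add_add_add_comm, hu, hv, add_add_add_comm]
  | tmul a b => simp [multTrip, thetaE₁, thetaE₂, mul'_ddOp]

lemma multTrip_contrT (Θ : A →ₗ[K] A ⊗[K] A) (z : Env K A ⊗[K] Env K A) :
    multTrip K A (contrT₁ K A Θ z, contrT₂ K A Θ z) = contrE K A (mul' K A ∘ₗ Θ) z := by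
  induction z using TensorProduct.induction_on with
  | zero => simp [multTrip]
  | add u v hu hv =>
    simp only [multTrip, coprod_apply, map_add] at hu hv ⊢
    rw [add_add_add_comm, hu, hv]
  | tmul ξ η =>
    have h := multTrip_thetaE Θ η
    simp only [multTrip, coprod_apply] at h ⊢
    simp only [contrT₁, contrT₂, contrE, lift.tmul, compl₂_apply, comp_apply]
    rw [rTensor_mul'_mul_embL₁, lTensor_mul'_mul_embL₂, ← mul_add, h]
    rfl

end Bimodule

section ModuleLevel

variable {K A Ω : Type*} [Field K] [Ring A] [Algebra K A]
  [AddCommGroup Ω] [Module K Ω] [Module (Env K A) Ω]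
  [IsScalarTower K (Env K A) Ω] [SMulCommClass (Env K A) K Ω]

-- `Env K A ⊗[K] Ω` stands for `Aᵉ ⊗_{Aᵉ} Ω`, which `envSmul` identifies with `Ω`.
variable (K A Ω) in
def envSmul : Env K A ⊗[K] Ω →ₗ[K] Ω := TensorProduct.lift (Algebra.lsmul K K Ω).toLinearMap

@[simp] lemma envSmul_tmul (ξ : Env K A) (ω : Ω) : envSmul K A Ω (ξ ⊗ₜ ω) = ξ • ω := rfl

lemma envSmul_rTensor_mulLeft (ξ : Env K A) (z : Env K A ⊗[K] Ω) :
    envSmul K A Ω (rTensor Ω (mulLeft K ξ) z) = ξ • envSmul K A Ω z := by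
  induction z using TensorProduct.induction_on with
  | zero => simp
  | add u v hu hv => simp only [map_add, hu, hv, smul_add]
  | tmul x ω => simp [mul_smul]

variable (K A Ω) in
def multΩ₁ : Trip₁ K A ⊗[K] Ω →ₗ[K] Ω := envSmul K A Ω ∘ₗ rTensor Ω (rTensor Aᵐᵒᵖ (mul' K A))

variable (K A Ω) in
def multΩ₂ : Trip₂ K A ⊗[K] Ω →ₗ[K] Ω := envSmul K A Ω ∘ₗ rTensor Ω (lTensor A (mul' K Aᵐᵒᵖ))

lemma multΩ₁_rTensor_mulLeft_embL₁ (ξ : Env K A) (z : Trip₁ K A ⊗[K] Ω) :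
    multΩ₁ K A Ω (rTensor Ω (mulLeft K (embL₁ K A ξ)) z) = ξ • multΩ₁ K A Ω z := by
  have h : rTensor Aᵐᵒᵖ (mul' K A) ∘ₗ mulLeft K (embL₁ K A ξ) =
      mulLeft K ξ ∘ₗ rTensor Aᵐᵒᵖ (mul' K A) :=
    LinearMap.ext (rTensor_mul'_mul_embL₁ ξ)
  rw [multΩ₁, comp_apply, comp_apply, ← envSmul_rTensor_mulLeft, ← rTensor_comp_apply, h,
    rTensor_comp_apply]

lemma multΩ₂_rTensor_mulLeft_embL₂ (ξ : Env K A) (z : Trip₂ K A ⊗[K] Ω) :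
    multΩ₂ K A Ω (rTensor Ω (mulLeft K (embL₂ K A ξ)) z) = ξ • multΩ₂ K A Ω z := by
  have h : lTensor A (mul' K Aᵐᵒᵖ) ∘ₗ mulLeft K (embL₂ K A ξ) =
      mulLeft K ξ ∘ₗ lTensor A (mul' K Aᵐᵒᵖ) :=
    LinearMap.ext (lTensor_mul'_mul_embL₂ ξ)
  rw [multΩ₂, comp_apply, comp_apply, ← envSmul_rTensor_mulLeft, ← rTensor_comp_apply, h,
    rTensor_comp_apply]

lemma multΩ_rTensor_contrT (Θ : A →ₗ[K] A ⊗[K] A) (x : (Env K A ⊗[K] Env K A) ⊗[K] Ω) :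
    multΩ₁ K A Ω (rTensor Ω (contrT₁ K A Θ) x) + multΩ₂ K A Ω (rTensor Ω (contrT₂ K A Θ) x) =
      envSmul K A Ω (rTensor Ω (contrE K A (mul' K A ∘ₗ Θ)) x) := by
  induction x using TensorProduct.induction_on with
  | zero => simp
  | add u v hu hv => simp only [map_add, add_add_add_comm, hu, hv]
  | tmul z ω =>
    have h := multTrip_contrT Θ z
    simp only [multTrip, coprod_apply] at h
    simp only [multΩ₁, multΩ₂, comp_apply, rTensor_tmul, envSmul_tmul, ← add_smul, h]

lemma multΩ_jay_eq_d_mul' (d : A →ₗ[K] Ω)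
    (hd : ∀ a b : A, d (a * b) = (a ⊗ₜ[K] (1 : Aᵐᵒᵖ)) • d b + ((1 : A) ⊗ₜ[K] op b) • d a)
    (u : A ⊗[K] A) :
    multΩ₁ K A Ω (rTensor Ω (jay₁ K A) (lTensor A d u)) +
        multΩ₂ K A Ω (rTensor Ω (jay₂ K A) (TensorProduct.comm K Ω A (rTensor A d u))) =
      d (mul' K A u) := by
  induction u using TensorProduct.induction_on with
  | zero => simp
  | add u v hu hv => simp only [map_add, add_add_add_comm, hu, hv]
  | tmul p q => simp [multΩ₁, multΩ₂, jay₁, jay₂, hd]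

lemma lift_mul_restrictScalars (e : Ω →ₗ[Env K A] Env K A) (z : Env K A ⊗[K] Ω) :
    TensorProduct.lift ((LinearMap.mul K (Env K A)).compl₂ (e.restrictScalars K)) z =
      e (envSmul K A Ω z) := by
  induction z using TensorProduct.induction_on with
  | zero => simp
  | add u v hu hv => simp only [map_add, hu, hv]
  | tmul ξ ω => simp

lemma rTensor_mul'_lift_embR₁ (e : Ω →ₗ[Env K A] Env K A) (z : Trip₁ K A ⊗[K] Ω) :
    rTensor Aᵐᵒᵖ (mul' K A) (TensorProduct.lift ((LinearMap.mul K (Trip₁ K A)).compl₂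
      (embR₁ K A ∘ₗ e.restrictScalars K)) z) = e (multΩ₁ K A Ω z) := by
  induction z using TensorProduct.induction_on with
  | zero => simp
  | add u v hu hv => simp only [map_add, hu, hv]
  | tmul t ω => simpa [multΩ₁] using rTensor_mul'_mul_embR₁ t (e ω)

lemma lTensor_mul'_lift_embR₂ (e : Ω →ₗ[Env K A] Env K A) (z : Trip₂ K A ⊗[K] Ω) :
    lTensor A (mul' K Aᵐᵒᵖ) (TensorProduct.lift ((LinearMap.mul K (Trip₂ K A)).compl₂
      (embR₂ K A ∘ₗ e.restrictScalars K)) z) = e (multΩ₂ K A Ω z) := by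
  induction z using TensorProduct.induction_on with
  | zero => simp
  | add u v hu hv => simp only [map_add, hu, hv]
  | tmul t ω => simpa [multΩ₂] using lTensor_mul'_mul_embR₂ t (e ω)

end ModuleLevel

variable (K A : Type*) [Field K] [CharZero K] [Ring A] [Algebra K A]

theorem stmt9
    (Ω : Type*) [AddCommGroup Ω] [Module K Ω] [Module (Env K A) Ω]
    [IsScalarTower K (Env K A) Ω] [SMulCommClass (Env K A) K Ω]
    -- the universal `S`-linear derivation `d : A → Ω`
    (d : A →ₗ[K] Ω)
    (hd : ∀ a b : A, d (a * b) =
      (a ⊗ₜ[K] (1 : Aᵐᵒᵖ)) • d b + ((1 : A) ⊗ₜ[K] op b) • d a)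
    (hgen : Submodule.span (Env K A) (Set.range ⇑d) = ⊤)
    -- `Ω` is finitely generated projective over `Aᵉ`: a finite dual basis
    (r : ℕ) (bas : Fin r → Ω) (ε : Fin r → (Ω →ₗ[Env K A] Env K A))
    -- the connection `∇ : Ω → Ω¹Aᵉ ⊗_{Aᵉ} Ω` (representative level) with its Leibniz rule
    (conn : Ω →ₗ[K] (Env K A ⊗[K] Env K A) ⊗[K] Ω)
    -- the `S`-linear double derivation `Θ` and `f = mult ∘ Θ`
    (Θ : A →ₗ[K] A ⊗[K] A)
    (hΘ : ∀ a b : A, Θ (a * b) = Θ a * ((1 : A) ⊗ₜ[K] b) + (a ⊗ₜ[K] (1 : A)) * Θ b)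
    -- the double Lie derivative `L_Θ : Ω → trip(A) ⊗_{Aᵉ} Ω ≅ (A⊗Ω) ⊕ (Ω⊗A)`,
    -- characterised on generators `a₀ d a₁` by the usual three-term formula
    (LΘ₁ : Ω →ₗ[K] Trip₁ K A ⊗[K] Ω) (LΘ₂ : Ω →ₗ[K] Trip₂ K A ⊗[K] Ω)
    (hLΘ₁ : ∀ a₀ a₁ : A,
      LΘ₁ ((a₀ ⊗ₜ[K] (1 : Aᵐᵒᵖ)) • d a₁) =
        (rTensor Ω (jay₁ K A))
          ((lTensor A (smulOn (d a₁) ∘ₗ inclE K A)) (Θ a₀) +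
            (TensorProduct.map (mulLeft K a₀) d) (Θ a₁)))
    (hLΘ₂ : ∀ a₀ a₁ : A,
      LΘ₂ ((a₀ ⊗ₜ[K] (1 : Aᵐᵒᵖ)) • d a₁) =
        (rTensor Ω (jay₂ K A))
          ((TensorProduct.comm K Ω A)
            ((rTensor A (smulFix (a₀ ⊗ₜ[K] (1 : Aᵐᵒᵖ)) ∘ₗ d)) (Θ a₁))))
    -- the ordinary Lie derivative `L_f : Ω → Aᵉ ⊗_{Aᵉ} Ω`, `L_f(a₀da₁) = f(a₀)da₁ + a₀df(a₁)`
    (Lf : Ω →ₗ[K] Env K A ⊗[K] Ω)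
    (hLf : ∀ a₀ a₁ : A,
      Lf ((a₀ ⊗ₜ[K] (1 : Aᵐᵒᵖ)) • d a₁) =
        (1 : Env K A) ⊗ₜ[K]
          (((mul' K A (Θ a₀)) ⊗ₜ[K] (1 : Aᵐᵒᵖ)) • d a₁ +
            (a₀ ⊗ₜ[K] (1 : Aᵐᵒᵖ)) • d (mul' K A (Θ a₁))))
    -- `i_{Θᵉ}∇ − L_Θ` and `i_{fᵉ}∇ − L_f` are `Aᵉ`-linear
    (hD₁ : ∀ (ξ : Env K A) (ω : Ω),
      ((rTensor Ω (contrT₁ K A Θ)) ∘ₗ conn - LΘ₁) (ξ • ω) =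
        (rTensor Ω (mulLeft K (embL₁ K A ξ)))
          (((rTensor Ω (contrT₁ K A Θ)) ∘ₗ conn - LΘ₁) ω))
    (hD₂ : ∀ (ξ : Env K A) (ω : Ω),
      ((rTensor Ω (contrT₂ K A Θ)) ∘ₗ conn - LΘ₂) (ξ • ω) =
        (rTensor Ω (mulLeft K (embL₂ K A ξ)))
          (((rTensor Ω (contrT₂ K A Θ)) ∘ₗ conn - LΘ₂) ω))
    (hDE : ∀ (ξ : Env K A) (ω : Ω),
      ((rTensor Ω (contrE K A (mul' K A ∘ₗ Θ))) ∘ₗ conn - Lf) (ξ • ω) =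
        (rTensor Ω (mulLeft K ξ))
          (((rTensor Ω (contrE K A (mul' K A ∘ₗ Θ))) ∘ₗ conn - Lf) ω)) :
    -- conclusion: `|mult|(TDiv^∇ Θ) = Div^∇(mult ∘ Θ)` in `|Aᵉ|`
    Submodule.Quotient.mk (p := envComm K A)
        (multTrip K A
          (∑ i, (TensorProduct.lift ((LinearMap.mul K (Trip₁ K A)).compl₂
              (embR₁ K A ∘ₗ (ε i).restrictScalars K)))
            ((((rTensor Ω (contrT₁ K A Θ)) ∘ₗ conn - LΘ₁)) (bas i)),
           ∑ i, (TensorProduct.lift ((LinearMap.mul K (Trip₂ K A)).compl₂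
              (embR₂ K A ∘ₗ (ε i).restrictScalars K)))
            ((((rTensor Ω (contrT₂ K A Θ)) ∘ₗ conn - LΘ₂)) (bas i)))) =
      Submodule.Quotient.mk (p := envComm K A)
        (∑ i, (TensorProduct.lift ((LinearMap.mul K (Env K A)).compl₂
            ((ε i).restrictScalars K)))
          ((((rTensor Ω (contrE K A (mul' K A ∘ₗ Θ))) ∘ₗ conn - Lf)) (bas i))) := by
  set D₁ := rTensor Ω (contrT₁ K A Θ) ∘ₗ conn - LΘ₁
  set D₂ := rTensor Ω (contrT₂ K A Θ) ∘ₗ conn - LΘ₂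
  set DE := rTensor Ω (contrE K A (mul' K A ∘ₗ Θ)) ∘ₗ conn - Lf
  have hΘ_one : Θ 1 = 0 := by simpa [← Algebra.TensorProduct.one_def] using hΘ 1 1
  have hLie (a : A) : multΩ₁ K A Ω (LΘ₁ (d a)) + multΩ₂ K A Ω (LΘ₂ (d a)) =
      envSmul K A Ω (Lf (d a)) := by
    have hd₁ : smulFix (1 : Env K A) ∘ₗ d = d := LinearMap.ext fun _ => one_smul _ _
    have h₀ : ((0 : A) ⊗ₜ[K] (1 : Aᵐᵒᵖ)) • d a = 0 := by
      rw [zero_tmul]; exact zero_smul (Env K A) (d a)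
    have h₁ := hLΘ₁ 1 a
    have h₂ := hLΘ₂ 1 a
    have h₃ := hLf 1 a
    simp only [← Algebra.TensorProduct.one_def, one_smul, hΘ_one, map_zero, zero_add, h₀,
      mulLeft_one, ← lTensor_def, hd₁] at h₁ h₂ h₃
    rw [h₁, h₂, h₃, envSmul_tmul, one_smul]
    exact multΩ_jay_eq_d_mul' d hd (Θ a)
  have hD : (multΩ₁ K A Ω ∘ₗ D₁ + multΩ₂ K A Ω ∘ₗ D₂).toAddMonoidHom =
      (envSmul K A Ω ∘ₗ DE).toAddMonoidHom := by
    refine AddMonoidHom.eq_of_map_smul_of_span_eq_top hgen (fun ξ ω => ?_) (fun ξ ω => ?_) ?_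
    · simp [hD₁, hD₂, multΩ₁_rTensor_mulLeft_embL₁, multΩ₂_rTensor_mulLeft_embL₂, smul_add]
    · simp [hDE, envSmul_rTensor_mulLeft]
    · rintro _ ⟨a, rfl⟩
      simp [D₁, D₂, DE, sub_add_sub_comm, multΩ_rTensor_contrT, hLie]
  congr 1
  simp only [multTrip, coprod_apply, map_sum, rTensor_mul'_lift_embR₁, lTensor_mul'_lift_embR₂,
    lift_mul_restrictScalars, ← Finset.sum_add_distrib, ← map_add]
  exact Finset.sum_congr rfl fun i _ => congr_arg (ε i) (DFunLike.congr_fun hD (bas i))
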